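/- Let 1 ≤ k < n+1 be integers with k+1 prime. Then the number of orbits of the rotation action of ℤ/(n+2) on (k+1)-element subsets of ℤ/(n+2) equals k/(k+1) + (1/(k+1))·C(n+1,k) if (k+1) divides n+2, and (1/(k+1))·C(n+1,k) otherwise. -/

import Mathlib

/-- The number of orbits of the rotation (translation) action of `ℤ/m` on the
set of `r`-element subsets of `ℤ/m`. -/
noncomputable def numOrbits (m r : ℕ) : ℕ :=
  Nat.card (Quot (fun s t : {s : Finset (ZMod m) // s.card = r} =>
    ∃ g : ZMod m, s.1.image (fun x => x + g) = t.1))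

/-!
By Burnside's lemma, `m` times the number `N` of orbits is the number of pairs `(a, s)` with
`a +ᵥ s = s`. A set fixed by `a` is a union of cosets of `⟨a⟩`, so the fixed `r`-sets correspond
to the `(r / ord a)`-subsets of `ℤ/m ⧸ ⟨a⟩` when `ord a ∣ r`, and there are none otherwise.
For `r = p` prime only `a = 0`, fixing all `C(m, p)` sets, and the `p - 1` elements of order `p`
(present iff `p ∣ m`), each fixing the `m / p` cosets of `⟨a⟩`, contribute. Hence
`N * m = C(m, p) + [p ∣ m] (p - 1) (m / p)`, and `m * C(m - 1, p - 1) = p * C(m, p)` turns this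
into the stated formula.
-/

open Finset AddAction
open scoped Pointwise

namespace QuotientAddGroup

variable {G : Type*} [AddCommGroup G] [Fintype G] (H : AddSubgroup G)
  [DecidableEq (G ⧸ H)]

def preimageFinset (t : Finset (G ⧸ H)) : Finset G := {x | (x : G ⧸ H) ∈ t}

variable {H}

@[simp]
lemma mem_preimageFinset {t : Finset (G ⧸ H)} {x : G} :
    x ∈ preimageFinset H t ↔ (x : G ⧸ H) ∈ t := by
  simp [preimageFinset]

lemma card_preimageFinset (t : Finset (G ⧸ H)) :
    #(preimageFinset H t) = Nat.card H * #t := by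
  have hcoe : (preimageFinset H t : Set G) = mk ⁻¹' (t : Set (G ⧸ H)) := by ext; simp
  rw [← Nat.card_eq_finsetCard, ← Nat.card_eq_finsetCard, ← Nat.card_prod]
  exact Nat.card_congr ((Equiv.setCongr hcoe).trans (preimageMkEquivAddSubgroupProdSet H t))

lemma image_mk_preimageFinset [DecidableEq G] (t : Finset (G ⧸ H)) :
    (preimageFinset H t).image mk = t := by
  ext q
  induction q using QuotientAddGroup.induction_on with
  | H x =>
    simp only [mem_image, mem_preimageFinset]
    exact ⟨fun ⟨_, hy, hyx⟩ => hyx ▸ hy, fun hx => ⟨x, hx, rfl⟩⟩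

lemma le_stabilizer_preimageFinset [DecidableEq G] (t : Finset (G ⧸ H)) :
    H ≤ stabilizer G (preimageFinset H t) := by
  intro h hh
  rw [mem_stabilizer_finset']
  intro x hx
  simpa [vadd_eq_add, QuotientAddGroup.mk_add, (QuotientAddGroup.eq_zero_iff h).mpr hh] using hx

lemma preimageFinset_image_mk [DecidableEq G] {s : Finset G} (hs : H ≤ stabilizer G s) :
    preimageFinset H (s.image mk) = s := by
  ext x
  simp only [mem_preimageFinset, mem_image, QuotientAddGroup.eq]
  constructor
  · rintro ⟨y, hy, hyx⟩
    simpa using mem_stabilizer_finset'.mp (hs hyx) hy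
  · exact fun hx => ⟨x, hx, by simp⟩

lemma card_eq_card_mul_card_image_mk [DecidableEq G] {s : Finset G}
    (hs : H ≤ stabilizer G s) : #s = Nat.card H * #(s.image (mk : G → G ⧸ H)) := by
  rw [← card_preimageFinset, preimageFinset_image_mk hs]

end QuotientAddGroup

open QuotientAddGroup AddSubgroup

section Necklaces

variable {G : Type*} [AddCommGroup G] [DecidableEq G]

lemma mem_fixedBy_powersetCard_iff {r : ℕ} {a : G} {s : Set.powersetCard G r} :
    s ∈ fixedBy (Set.powersetCard G r) a ↔ zmultiples a ≤ stabilizer G (s : Finset G) := by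
  rw [mem_fixedBy, zmultiples_le, mem_stabilizer_iff, ← Subtype.coe_inj, Set.powersetCard.coe_vadd]

variable [Fintype G]

def fixedByPowersetCardEquiv (a : G) (r : ℕ) [DecidableEq (G ⧸ zmultiples a)] :
    fixedBy (Set.powersetCard G r) a ≃
      {t : Finset (G ⧸ zmultiples a) // addOrderOf a * #t = r} where
  toFun s := ⟨(s : Finset G).image mk, by
    rw [← Nat.card_zmultiples, ← card_eq_card_mul_card_image_mk
      (mem_fixedBy_powersetCard_iff.mp s.2)]
    exact Set.powersetCard.card_eq s.1⟩
  invFun t := ⟨⟨preimageFinset _ t.1, by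
    rw [Set.powersetCard.mem_iff, card_preimageFinset, Nat.card_zmultiples, t.2]⟩,
    mem_fixedBy_powersetCard_iff.mpr (le_stabilizer_preimageFinset t.1)⟩
  left_inv s := by
    apply Subtype.ext; apply Subtype.ext
    exact preimageFinset_image_mk (mem_fixedBy_powersetCard_iff.mp s.2)
  right_inv t := Subtype.ext (image_mk_preimageFinset t.1)

theorem card_fixedBy_powersetCard (a : G) (r : ℕ) :
    Nat.card (fixedBy (Set.powersetCard G r) a) =
      if addOrderOf a ∣ r then (Nat.card G / addOrderOf a).choose (r / addOrderOf a) else 0 := by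
  classical
  rw [Nat.card_congr (fixedByPowersetCardEquiv a r)]
  split_ifs with hdvd
  · obtain ⟨c, rfl⟩ := hdvd
    have hpos : 0 < addOrderOf a := addOrderOf_pos a
    have hquot : Nat.card (G ⧸ zmultiples a) = Nat.card G / addOrderOf a := by
      rw [card_eq_card_quotient_mul_card_addSubgroup (zmultiples a), Nat.card_zmultiples,
        Nat.mul_div_cancel _ hpos]
    rw [Nat.mul_div_cancel_left _ hpos, ← hquot, ← Set.powersetCard.card]
    exact Nat.card_congr (Equiv.subtypeEquivRight fun t => by
      rw [Set.powersetCard.mem_iff, Nat.mul_left_cancel_iff hpos])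
  · have : IsEmpty {t : Finset (G ⧸ zmultiples a) // addOrderOf a * #t = r} :=
      ⟨fun t => hdvd ⟨_, t.2.symm⟩⟩
    exact Nat.card_of_isEmpty

end Necklaces

lemma IsAddCyclic.card_filter_addOrderOf_eq {G : Type*} [AddGroup G] [IsAddCyclic G] [Fintype G]
    (d : ℕ) : #{a : G | addOrderOf a = d} = if d ∣ Fintype.card G then d.totient else 0 := by
  split_ifs with hd
  · exact IsAddCyclic.card_addOrderOf_eq_totient hd
  · rw [card_eq_zero, filter_eq_empty_iff]
    rintro a - rfl
    exact hd addOrderOf_dvd_card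

lemma card_fixedBy_powersetCard_prime {G : Type*} [AddCommGroup G] [Fintype G] [DecidableEq G]
    {p : ℕ} (hp : p.Prime) (a : G) :
    Nat.card (fixedBy (Set.powersetCard G p) a) =
      (if a = 0 then (Nat.card G).choose p else 0) +
        if addOrderOf a = p then Nat.card G / p else 0 := by
  rw [card_fixedBy_powersetCard]
  by_cases ha : a = 0
  · simp [ha, hp.ne_one.symm]
  · have hne : addOrderOf a ≠ 1 := by rwa [Ne, AddMonoid.addOrderOf_eq_one_iff]
    simp only [ha, if_false, zero_add, Nat.dvd_prime hp, hne, false_or]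
    split_ifs with h
    · simp [h, hp.pos]
    · rfl

lemma numOrbits_eq_card_orbitRel_quotient (m r : ℕ) :
    numOrbits m r = Nat.card (orbitRel.Quotient (ZMod m) (Set.powersetCard (ZMod m) r)) := by
  refine Nat.card_congr (Quot.congrRight fun (s t : Set.powersetCard (ZMod m) r) => ?_)
  rw [Setoid.comm' (orbitRel _ _), orbitRel_apply, mem_orbit_iff]
  simp only [Subtype.ext_iff, Set.powersetCard.coe_vadd, vadd_finset_def, vadd_eq_add, add_comm]

lemma numOrbits_mul_eq_sum_card_fixedBy (m r : ℕ) [NeZero m] :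
    numOrbits m r * m = ∑ a : ZMod m, Nat.card (fixedBy (Set.powersetCard (ZMod m) r) a) := by
  classical
  rw [numOrbits_eq_card_orbitRel_quotient]
  simpa [Nat.card_eq_fintype_card, ZMod.card] using
    (sum_card_fixedBy_eq_card_orbits_mul_card_addGroup (ZMod m) (Set.powersetCard (ZMod m) r)).symm

lemma numOrbits_mul_of_prime (m : ℕ) [NeZero m] {p : ℕ} (hp : p.Prime) :
    numOrbits m p * m = m.choose p + (if p ∣ m then p - 1 else 0) * (m / p) := by
  simp only [numOrbits_mul_eq_sum_card_fixedBy, card_fixedBy_powersetCard_prime hp, Nat.card_zmod,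
    sum_add_distrib, sum_ite_eq', mem_univ, if_true, sum_ite, sum_const_zero, add_zero, sum_const,
    smul_eq_mul, IsAddCyclic.card_filter_addOrderOf_eq, ZMod.card, Nat.totient_prime hp]

lemma numOrbits_succ_mul_of_prime (m : ℕ) {p : ℕ} (hp : p.Prime) :
    numOrbits (m + 1) p * p = m.choose (p - 1) + if p ∣ m + 1 then p - 1 else 0 := by
  have h := numOrbits_mul_of_prime (m + 1) hp
  have hchoose := Nat.add_one_mul_choose_eq m (p - 1)
  rw [Nat.sub_add_cancel hp.one_le] at hchoose
  apply Nat.eq_of_mul_eq_mul_left m.succ_pos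
  split_ifs at h ⊢ with hd
  · calc (m + 1) * (numOrbits (m + 1) p * p)
        = (numOrbits (m + 1) p * (m + 1)) * p := by ring
      _ = (m + 1).choose p * p + (p - 1) * ((m + 1) / p * p) := by rw [h]; ring
      _ = (m + 1) * (m.choose (p - 1) + (p - 1)) := by
        rw [← hchoose, Nat.div_mul_cancel hd]; ring
  · calc (m + 1) * (numOrbits (m + 1) p * p)
        = (numOrbits (m + 1) p * (m + 1)) * p := by ring
      _ = (m + 1).choose p * p := by rw [h]; ring
      _ = (m + 1) * (m.choose (p - 1) + 0) := by rw [← hchoose, add_zero]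

theorem stmt13_general (n k : ℕ) (hp : (k + 1).Prime) :
    ((k + 1) ∣ (n + 2) →
      numOrbits (n + 2) (k + 1) * (k + 1) = k + (n + 1).choose k) ∧
    (¬ (k + 1) ∣ (n + 2) →
      numOrbits (n + 2) (k + 1) * (k + 1) = (n + 1).choose k) := by
  have h := numOrbits_succ_mul_of_prime (n + 1) hp
  rw [Nat.add_sub_cancel] at h
  exact ⟨fun hd => by rw [h, if_pos hd, add_comm], fun hd => by rw [h, if_neg hd, add_zero]⟩

/-- If `k+1` is prime, the number of orbits of the rotation action of `ℤ/(n+2)` on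
`(k+1)`-element subsets equals `k/(k+1) + (1/(k+1))·C(n+1,k)` if `(k+1) ∣ n+2`, and
`(1/(k+1))·C(n+1,k)` otherwise. -/
theorem stmt13 (n k : ℕ) (hk : 1 ≤ k) (hkn : k < n + 1) (hp : (k + 1).Prime) :
    ((k + 1) ∣ (n + 2) →
      numOrbits (n + 2) (k + 1) * (k + 1) = k + (n + 1).choose k) ∧
    (¬ (k + 1) ∣ (n + 2) →
      numOrbits (n + 2) (k + 1) * (k + 1) = (n + 1).choose k) :=
  stmt13_general n k hp
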